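/- arXiv:2309.07190 — 3 statements merged into one kernel-verified Lean document; each statement's English description precedes it below -/
import Mathlib

section
/- For a real m×n matrix A, the operator norm ‖A‖_{2,1} induced by the Euclidean norm on ℝ^n and the 1-norm on ℝ^m equals the maximum over all sign vectors u ∈ {-1,1}^m of the Euclidean norm of Aᵀu. -/
open Finset Matrix

noncomputable def pnorm1 {k : ℕ} (x : Fin k → ℝ) : ℝ := ∑ j, |x j|
noncomputable def pnorm2 {k : ℕ} (x : Fin k → ℝ) : ℝ := Real.sqrt (∑ j, (x j) ^ 2)
noncomputable def pnormInf {k : ℕ} (x : Fin k → ℝ) : ℝ := ⨆ j, |x j|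

lemma pnorm2_nonneg {k : ℕ} (x : Fin k → ℝ) : 0 ≤ pnorm2 x := Real.sqrt_nonneg _

lemma pnorm2_sq {k : ℕ} (x : Fin k → ℝ) : pnorm2 x ^ 2 = ∑ j, (x j) ^ 2 :=
  Real.sq_sqrt (Finset.sum_nonneg fun j _ => sq_nonneg _)

lemma cauchy_schwarz {k : ℕ} (u v : Fin k → ℝ) :
    ∑ j, u j * v j ≤ pnorm2 u * pnorm2 v := by
  have h := Finset.sum_mul_sq_le_sq_mul_sq Finset.univ u v
  have h2 : |∑ j, u j * v j| ≤ pnorm2 u * pnorm2 v := by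
    have := Real.sqrt_le_sqrt h
    rwa [Real.sqrt_sq_eq_abs, Real.sqrt_mul (Finset.sum_nonneg fun j _ => sq_nonneg _)] at this
  exact (le_abs_self _).trans h2

lemma dot_eq {m n : ℕ} (A : Matrix (Fin m) (Fin n) ℝ) (u : Fin m → ℝ) (x : Fin n → ℝ) :
    ∑ i, u i * (A.mulVec x) i = ∑ j, (A.transpose.mulVec u) j * x j := by
  calc ∑ i, u i * (A.mulVec x) i = u ⬝ᵥ (A *ᵥ x) := rfl
    _ = (u ᵥ* A) ⬝ᵥ x := dotProduct_mulVec u A x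
    _ = (Aᵀ *ᵥ u) ⬝ᵥ x := by rw [mulVec_transpose]
    _ = ∑ j, (A.transpose.mulVec u) j * x j := rfl

/-- ‖A‖₂,₁ equals the maximum over sign vectors u ∈ {-1,1}^m of ‖Aᵀu‖₂. -/
theorem norm_two_one (m n : ℕ) (A : Matrix (Fin m) (Fin n) ℝ) :
    sSup {r : ℝ | ∃ x : Fin n → ℝ, pnorm2 x = 1 ∧ r = pnorm1 (A.mulVec x)} =
      sSup {r : ℝ | ∃ u : Fin m → ℝ, (∀ a, u a = 1 ∨ u a = -1) ∧
        r = pnorm2 (A.transpose.mulVec u)} := by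
  set S1 := {r : ℝ | ∃ x : Fin n → ℝ, pnorm2 x = 1 ∧ r = pnorm1 (A.mulVec x)} with hS1
  set S2 := {r : ℝ | ∃ u : Fin m → ℝ, (∀ a, u a = 1 ∨ u a = -1) ∧
        r = pnorm2 (A.transpose.mulVec u)} with hS2
  have hS2ne : S2.Nonempty :=
    ⟨pnorm2 (A.transpose.mulVec fun _ => 1), fun _ => 1, fun _ => Or.inl rfl, rfl⟩
  -- S2 is finite
  have hS2fin : S2.Finite := by
    have hU : (Set.univ.pi fun _ : Fin m => ({1, -1} : Set ℝ)).Finite :=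
      Set.Finite.pi fun _ => (Set.finite_singleton (-1)).insert 1
    exact Set.Finite.subset (hU.image fun u => pnorm2 (A.transpose.mulVec u)) (by
      rintro r ⟨u, hu, rfl⟩
      exact ⟨u, fun a _ => by rcases hu a with h | h <;> simp [h], rfl⟩)
  have hS2bdd : BddAbove S2 := hS2fin.bddAbove
  -- every element of S1 is ≤ sSup S2
  have hub : ∀ r ∈ S1, r ≤ sSup S2 := by
    rintro r ⟨x, hx, rfl⟩
    set u : Fin m → ℝ := fun i => if 0 ≤ A.mulVec x i then 1 else -1 with hudef
    have hu : ∀ a, u a = 1 ∨ u a = -1 := by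
      intro a; by_cases h : 0 ≤ A.mulVec x a <;> simp [hudef, h]
    have h1 : pnorm1 (A.mulVec x) = ∑ i, u i * (A.mulVec x) i := by
      unfold pnorm1
      refine Finset.sum_congr rfl fun i _ => ?_
      by_cases h : 0 ≤ A.mulVec x i
      · simp [hudef, h, abs_of_nonneg h]
      · simp [hudef, h, abs_of_neg (lt_of_not_ge h)]
    calc pnorm1 (A.mulVec x) = ∑ j, (A.transpose.mulVec u) j * x j := by rw [h1, dot_eq]
      _ ≤ pnorm2 (A.transpose.mulVec u) * pnorm2 x := cauchy_schwarz _ _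
      _ = pnorm2 (A.transpose.mulVec u) := by rw [hx, mul_one]
      _ ≤ sSup S2 := le_csSup hS2bdd ⟨u, hu, rfl⟩
  have hBdd1 : BddAbove S1 := ⟨sSup S2, hub⟩
  rcases Nat.eq_zero_or_pos n with hn | hn
  · -- n = 0 : both sides are 0
    subst hn
    have hS1e : S1 = ∅ := by
      ext r; simp only [hS1, Set.mem_setOf_eq, Set.mem_empty_iff_false, iff_false]
      rintro ⟨x, hx, -⟩
      simp [pnorm2] at hx
    have hS2e : S2 = {0} := by
      ext r
      constructor
      · rintro ⟨u, -, rfl⟩; simp [pnorm2]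
      · rintro rfl; exact ⟨fun _ => 1, fun _ => Or.inl rfl, by simp [pnorm2]⟩
    rw [hS1e, hS2e, Real.sSup_empty, csSup_singleton]
  · -- n ≥ 1
    have hS1ne : S1.Nonempty := by
      refine ⟨pnorm1 (A.mulVec fun j => if j = ⟨0, hn⟩ then 1 else 0),
        (fun j => if j = ⟨0, hn⟩ then 1 else 0), ?_, rfl⟩
      simp [pnorm2, apply_ite (· ^ 2)]
    have h0le : 0 ≤ sSup S1 := by
      obtain ⟨r, hr⟩ := hS1ne
      obtain ⟨x, hx, rfl⟩ := hr
      exact le_trans (Finset.sum_nonneg fun i _ => abs_nonneg _) (le_csSup hBdd1 ⟨x, hx, rfl⟩)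
    have hlb : ∀ r ∈ S2, r ≤ sSup S1 := by
      rintro r ⟨u, hu, rfl⟩
      set w := A.transpose.mulVec u with hwdef
      by_cases hw : pnorm2 w = 0
      · rw [hw]; exact h0le
      · have hwpos : 0 < pnorm2 w := lt_of_le_of_ne (pnorm2_nonneg w) (Ne.symm hw)
        set c := (pnorm2 w)⁻¹ with hcdef
        have hcpos : 0 < c := inv_pos.mpr hwpos
        set x : Fin n → ℝ := fun j => c * w j with hxdef
        have hx2 : pnorm2 x = 1 := by
          have : ∑ j, (x j) ^ 2 = c ^ 2 * ∑ j, (w j) ^ 2 := by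
            simp [hxdef, mul_pow, Finset.mul_sum]
          rw [pnorm2, this, Real.sqrt_mul (sq_nonneg c), Real.sqrt_sq hcpos.le]
          rw [show Real.sqrt (∑ j, (w j) ^ 2) = pnorm2 w from rfl]
          rw [hcdef, inv_mul_cancel₀ hw]
        have hstep1 : ∑ i, u i * (A.mulVec x) i ≤ pnorm1 (A.mulVec x) := by
          unfold pnorm1
          refine Finset.sum_le_sum fun i _ => ?_
          calc u i * (A.mulVec x) i ≤ |u i * (A.mulVec x) i| := le_abs_self _
            _ = |u i| * |(A.mulVec x) i| := abs_mul _ _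
            _ = |(A.mulVec x) i| := by rcases hu i with h | h <;> simp [h]
        have hstep2 : ∑ i, u i * (A.mulVec x) i = pnorm2 w := by
          rw [dot_eq]
          have : ∑ j, w j * x j = c * ∑ j, (w j) ^ 2 := by
            rw [Finset.mul_sum]
            exact Finset.sum_congr rfl fun j _ => by simp [hxdef]; ring
          rw [← hwdef, this, ← pnorm2_sq, sq, hcdef, inv_mul_cancel_left₀ hw]
        calc pnorm2 w = ∑ i, u i * (A.mulVec x) i := hstep2.symm
          _ ≤ pnorm1 (A.mulVec x) := hstep1
          _ ≤ sSup S1 := le_csSup hBdd1 ⟨x, hx2, rfl⟩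
    exact le_antisymm (csSup_le hS1ne hub) (csSup_le hS2ne hlb)
end

section
/- For a real m×n matrix A with no zero rows, if x₀ ∈ ℝ^n with ‖x₀‖_2 = 1 satisfies ⟨r(A,a), x₀⟩ = 0 for some row a, then x₀ is not a local maximum of the function x ↦ ‖Ax‖_1 restricted to the Euclidean unit sphere. -/
open Finset Matrix

set_option maxHeartbeats 1000000 in
/-- If A has no zero rows and some row is orthogonal to x₀ on the unit sphere, then x₀
is not a local maximum of x ↦ ‖Ax‖₁ on the sphere. -/
theorem not_local_max_on_degenerate_set (m n : ℕ) (A : Matrix (Fin m) (Fin n) ℝ)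
    (hrows : ∀ a : Fin m, (fun j => A a j) ≠ 0)
    (x₀ : Fin n → ℝ) (hx₀ : pnorm2 x₀ = 1)
    (horth : ∃ a : Fin m, ∑ j, A a j * x₀ j = 0) :
    ¬ ∃ ε : ℝ, 0 < ε ∧ ∀ x : Fin n → ℝ, pnorm2 x = 1 → pnorm2 (x - x₀) < ε →
        pnorm1 (A.mulVec x) ≤ pnorm1 (A.mulVec x₀) := by
  rintro ⟨ε, hε, hmax⟩
  obtain ⟨a, ha⟩ := horth
  set c : ℝ := Real.sqrt (∑ j, (A a j) ^ 2) with hc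
  have hs0 : 0 < ∑ j, (A a j) ^ 2 := by
    obtain ⟨j, hj⟩ := Function.ne_iff.1 (hrows a)
    have hj' : (0:ℝ) < (A a j) ^ 2 := by
      have : A a j ≠ 0 := hj
      positivity
    exact Finset.sum_pos' (fun i _ => sq_nonneg _) ⟨j, Finset.mem_univ j, hj'⟩
  have hcpos : 0 < c := Real.sqrt_pos.2 hs0
  have hc2 : c ^ 2 = ∑ j, (A a j) ^ 2 := Real.sq_sqrt hs0.le
  set u : Fin n → ℝ := fun j => A a j / c with hu
  have hux : ∑ j, u j * x₀ j = 0 := by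
    simp only [hu, div_mul_eq_mul_div, ← Finset.sum_div, ha, zero_div]
  have huu : ∑ j, (u j) ^ 2 = 1 := by
    simp only [hu, div_pow, ← Finset.sum_div, ← hc2]
    field_simp
  have hxx : ∑ j, (x₀ j) ^ 2 = 1 := by
    have h := hx₀
    unfold pnorm2 at h
    nlinarith [Real.sq_sqrt (Finset.sum_nonneg (fun j _ => sq_nonneg (x₀ j)) :
      (0:ℝ) ≤ ∑ j, (x₀ j) ^ 2)]
  set y : Fin m → ℝ := fun b => ∑ j, A b j * x₀ j with hy
  set z : Fin m → ℝ := fun b => ∑ j, A b j * u j with hz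
  have hya : y a = 0 := ha
  have hza : z a = c := by
    show (∑ j, A a j * u j) = c
    simp only [hu]
    rw [show (∑ j, A a j * (A a j / c)) = ∑ j, (A a j) ^ 2 / c from
      Finset.sum_congr rfl fun j _ => by rw [sq]; ring, ← Finset.sum_div, ← hc2]
    rw [sq, mul_div_assoc, div_self hcpos.ne', mul_one]
  set F : ℝ := pnorm1 (A.mulVec x₀) with hF
  have hFy : F = ∑ b, |y b| := by
    unfold pnorm1 at hF
    exact hF
  have hF0 : 0 ≤ F := by
    rw [hFy]; exact Finset.sum_nonneg fun b _ => abs_nonneg _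
  -- choose t
  set t : ℝ := min (ε / 2) (min 1 (c / (2 * (F + 1)))) with htdef
  have htpos : 0 < t := by
    apply lt_min (by linarith) (lt_min one_pos (by positivity))
  have ht1 : t ≤ 1 := le_trans (min_le_right _ _) (min_le_left _ _)
  have htε : t < ε := lt_of_le_of_lt (min_le_left _ _) (by linarith)
  have htF : t * F < c := by
    have h1 : t ≤ c / (2 * (F + 1)) := le_trans (min_le_right _ _) (min_le_right _ _)
    have h2 : t * F ≤ c / (2 * (F + 1)) * F :=
      mul_le_mul_of_nonneg_right h1 hF0
    have h3 : c / (2 * (F + 1)) * F < c := by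
      rw [div_mul_eq_mul_div, div_lt_iff₀ (by positivity)]
      nlinarith
    linarith
  -- trig facts
  have hsinpos : 0 < Real.sin t := Real.sin_pos_of_pos_of_lt_pi htpos
    (lt_of_le_of_lt ht1 (by linarith [Real.pi_gt_three]))
  have hcost : 1 - t ^ 2 / 2 ≤ Real.cos t := Real.one_sub_sq_div_two_le_cos
  have hcospos : 0 < Real.cos t := by nlinarith
  have hsin_ge : t / 2 ≤ Real.sin t := by
    have h := Real.mul_abs_le_abs_sin (x := t) (by
      rw [abs_of_pos htpos]
      linarith [Real.pi_gt_three])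
    rw [abs_of_pos htpos, abs_of_pos hsinpos] at h
    have hhalf : (1:ℝ)/2 ≤ 2 / Real.pi := by
      rw [div_le_div_iff₀ (by norm_num) Real.pi_pos]
      nlinarith [Real.pi_le_four]
    nlinarith [mul_le_mul_of_nonneg_right hhalf htpos.le]
  -- expansion of sums of squares
  have expand : ∀ p q : ℝ, ∑ j, (p * x₀ j + q * u j) ^ 2
      = p ^ 2 + 2 * p * q * (∑ j, u j * x₀ j) + q ^ 2 := by
    intro p q
    have h : ∑ j, (p * x₀ j + q * u j) ^ 2
        = p ^ 2 * (∑ j, (x₀ j) ^ 2) + 2 * p * q * (∑ j, u j * x₀ j)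
          + q ^ 2 * (∑ j, (u j) ^ 2) := by
      rw [Finset.mul_sum, Finset.mul_sum, Finset.mul_sum, ← Finset.sum_add_distrib,
        ← Finset.sum_add_distrib]
      exact Finset.sum_congr rfl fun j _ => by ring
    rw [h, hxx, huu]; ring
  have hnorm : ∀ p q : ℝ, p ^ 2 + q ^ 2 = 1 →
      pnorm2 (fun j => p * x₀ j + q * u j) = 1 := by
    intro p q hpq
    unfold pnorm2
    rw [expand, hux]
    rw [show p ^ 2 + 2 * p * q * 0 + q ^ 2 = 1 by linarith]
    exact Real.sqrt_one
  have hdist : ∀ p q : ℝ, p ^ 2 + q ^ 2 = 1 →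
      pnorm2 ((fun j => p * x₀ j + q * u j) - x₀) = Real.sqrt (2 - 2 * p) := by
    intro p q hpq
    unfold pnorm2
    congr 1
    have h : ∀ j, ((fun j => p * x₀ j + q * u j) - x₀) j = (p - 1) * x₀ j + q * u j := by
      intro j; simp [Pi.sub_apply]; ring
    rw [Finset.sum_congr rfl fun j _ => by rw [h j], expand, hux]
    linear_combination hpq
  have hdist_lt : ∀ p q : ℝ, p ^ 2 + q ^ 2 = 1 → 1 - t ^ 2 / 2 ≤ p →
      pnorm2 ((fun j => p * x₀ j + q * u j) - x₀) < ε := by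
    intro p q hpq hp
    rw [hdist p q hpq]
    calc Real.sqrt (2 - 2 * p) ≤ Real.sqrt (t ^ 2) := by
          apply Real.sqrt_le_sqrt; nlinarith
      _ = t := by rw [Real.sqrt_sq htpos.le]
      _ < ε := htε
  -- mulVec computation
  have hmv : ∀ (p q : ℝ) (b : Fin m),
      A.mulVec (fun j => p * x₀ j + q * u j) b = p * y b + q * z b := by
    intro p q b
    simp only [Matrix.mulVec, dotProduct, hy, hz, Finset.mul_sum]
    rw [← Finset.sum_add_distrib]
    exact Finset.sum_congr rfl fun j _ => by ring
  have hpq1 : (Real.cos t) ^ 2 + (Real.sin t) ^ 2 = 1 := Real.cos_sq_add_sin_sq t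
  have hpq2 : (Real.cos t) ^ 2 + (-Real.sin t) ^ 2 = 1 := by
    rw [neg_sq]; exact hpq1
  have hle1 := hmax (fun j => Real.cos t * x₀ j + Real.sin t * u j)
    (hnorm _ _ hpq1) (hdist_lt _ _ hpq1 hcost)
  have hle2 := hmax (fun j => Real.cos t * x₀ j + (-Real.sin t) * u j)
    (hnorm _ _ hpq2) (hdist_lt _ _ hpq2 hcost)
  -- lower bound on the sum of the two pnorm1's
  have step : ∀ b : Fin m, 2 * Real.cos t * |y b| + (if b = a then 2 * Real.sin t * c else 0)
      ≤ |A.mulVec (fun j => Real.cos t * x₀ j + Real.sin t * u j) b| +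
        |A.mulVec (fun j => Real.cos t * x₀ j + (-Real.sin t) * u j) b| := by
    intro b
    rw [hmv, hmv]
    have habs : 2 * (Real.cos t * |y b|) ≤
        |Real.cos t * y b + Real.sin t * z b| +
        |Real.cos t * y b + (-Real.sin t) * z b| := by
      have h := abs_add_le (Real.cos t * y b + Real.sin t * z b)
        (Real.cos t * y b + (-Real.sin t) * z b)
      have h2 : |Real.cos t * y b + Real.sin t * z b +
          (Real.cos t * y b + (-Real.sin t) * z b)| = 2 * (Real.cos t * |y b|) := by
        rw [show Real.cos t * y b + Real.sin t * z b +
            (Real.cos t * y b + (-Real.sin t) * z b) = 2 * (Real.cos t * y b) by ring,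
          abs_mul, abs_mul, abs_two, abs_of_pos hcospos]
      linarith
    by_cases hb : b = a
    · rw [if_pos hb, hb, hya, hza]
      have h3 : |Real.cos t * 0 + Real.sin t * c| + |Real.cos t * 0 + (-Real.sin t) * c|
          = 2 * Real.sin t * c := by
        rw [show Real.cos t * 0 + Real.sin t * c = Real.sin t * c by ring,
          show Real.cos t * 0 + (-Real.sin t) * c = -(Real.sin t * c) by ring, abs_neg,
          abs_of_pos (mul_pos hsinpos hcpos)]
        ring
      rw [h3]
      simp
    · rw [if_neg hb, add_zero]
      linarith
  have hsumeq : ∑ b, (2 * Real.cos t * |y b| + (if b = a then 2 * Real.sin t * c else 0))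
      = 2 * Real.cos t * F + 2 * Real.sin t * c := by
    rw [Finset.sum_add_distrib, Finset.sum_ite_eq' Finset.univ a
      (fun _ => 2 * Real.sin t * c)]
    simp only [Finset.mem_univ, if_true]
    rw [show (∑ b, 2 * Real.cos t * |y b|) = 2 * Real.cos t * ∑ b, |y b| from
      (Finset.mul_sum _ _ _).symm, ← hFy]
  have hsum : 2 * Real.cos t * F + 2 * Real.sin t * c ≤
      pnorm1 (A.mulVec (fun j => Real.cos t * x₀ j + Real.sin t * u j)) +
      pnorm1 (A.mulVec (fun j => Real.cos t * x₀ j + (-Real.sin t) * u j)) := by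
    unfold pnorm1
    rw [← Finset.sum_add_distrib, ← hsumeq]
    exact Finset.sum_le_sum fun b _ => step b
  -- derive contradiction
  have hfinal : Real.sin t * c ≤ (1 - Real.cos t) * F := by nlinarith
  have h1 : (1 - Real.cos t) * F ≤ t ^ 2 / 2 * F := by nlinarith
  have h2 : t ^ 2 / 2 * F = t / 2 * (t * F) := by ring
  have h3 : t / 2 * (t * F) < t / 2 * c :=
    mul_lt_mul_of_pos_left htF (by positivity)
  have h4 : t / 2 * c ≤ Real.sin t * c :=
    mul_le_mul_of_nonneg_right hsin_ge hcpos.le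
  linarith
end

section
/- For a real m×n matrix A and x₀ on the Euclidean unit sphere maximizing x ↦ ‖Ax‖_∞ over the sphere, every row r(A,a) achieving ⟨r(A,a), x₀⟩ = ‖Ax₀‖_∞ is a scalar multiple of x₀, namely r(A,a) = ⟨r(A,a), x₀⟩ x₀. -/
open Finset Matrix

/-- At a maximizer x₀ of x ↦ ‖Ax‖∞ on the Euclidean unit sphere, every row achieving
the maximum is a multiple of x₀. -/
theorem row_collinear_at_max (m n : ℕ) (A : Matrix (Fin m) (Fin n) ℝ)
    (x₀ : Fin n → ℝ) (hx₀ : pnorm2 x₀ = 1)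
    (hmax : ∀ x : Fin n → ℝ, pnorm2 x = 1 →
      pnormInf (A.mulVec x) ≤ pnormInf (A.mulVec x₀)) :
    ∀ a : Fin m, (∑ j, A a j * x₀ j) = pnormInf (A.mulVec x₀) →
      (fun j => A a j) = (∑ j, A a j * x₀ j) • x₀ := by
  intro a hMa
  obtain ⟨M, hMdef⟩ : ∃ M : ℝ, M = ∑ j, A a j * x₀ j := ⟨_, rfl⟩
  rw [← hMdef] at hMa ⊢
  have hSnn : (0:ℝ) ≤ ∑ j, (x₀ j)^2 := Finset.sum_nonneg fun j _ => sq_nonneg _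
  have hx2 : ∑ j, (x₀ j)^2 = 1 := by
    have h := hx₀
    unfold pnorm2 at h
    have := Real.sq_sqrt hSnn
    rw [h] at this; linarith [this]
  have hbound : ∀ x : Fin n → ℝ, |∑ j, A a j * x j| ≤ pnormInf (A.mulVec x) := by
    intro x
    have h1 : |A.mulVec x a| ≤ ⨆ i, |A.mulVec x i| :=
      le_ciSup (f := fun i => |A.mulVec x i|) (Set.Finite.bddAbove (Set.finite_range _)) a
    simpa [pnormInf, Matrix.mulVec, dotProduct] using h1
  -- key inequality: ∑ (A a j)^2 ≤ M^2
  have hSann : (0:ℝ) ≤ ∑ j, (A a j)^2 := Finset.sum_nonneg fun j _ => sq_nonneg _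
  have key : ∑ j, (A a j)^2 ≤ M^2 := by
    rcases eq_or_lt_of_le hSann with h0 | hpos
    · have hM0 : M = 0 := by
        have hz : ∀ j ∈ Finset.univ, (A a j)^2 = 0 := by
          intro j _
          exact (Finset.sum_eq_zero_iff_of_nonneg (fun j _ => sq_nonneg _)).mp h0.symm j
            (Finset.mem_univ j)
        have : ∀ j, A a j = 0 := fun j => pow_eq_zero_iff (by norm_num) |>.mp (hz j (Finset.mem_univ j))
        simp [hMdef, this]
      rw [← h0, hM0]; simp
    · set s : ℝ := Real.sqrt (∑ j, (A a j)^2) with hsdef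
      have hspos : 0 < s := Real.sqrt_pos.mpr hpos
      have hs2 : s^2 = ∑ j, (A a j)^2 := Real.sq_sqrt (le_of_lt hpos)
      have hxnorm : pnorm2 (fun j => A a j / s) = 1 := by
        unfold pnorm2
        have : ∑ j, (A a j / s)^2 = (∑ j, (A a j)^2) / s^2 := by
          rw [Finset.sum_div]
          exact Finset.sum_congr rfl fun j _ => by ring
        rw [this, ← hs2, div_self (by positivity)]
        exact Real.sqrt_one
      have h1 := hmax _ hxnorm
      have h2 := hbound (fun j => A a j / s)
      have h3 : ∑ j, A a j * (A a j / s) = s := by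
        have : ∑ j, A a j * (A a j / s) = (∑ j, (A a j)^2) / s := by
          rw [Finset.sum_div]
          exact Finset.sum_congr rfl fun j _ => by ring
        rw [this, ← hs2]
        field_simp
      have hsM : s ≤ M := by
        calc s = |s| := (abs_of_pos hspos).symm
        _ = |∑ j, A a j * (A a j / s)| := by rw [h3]
        _ ≤ pnormInf (A.mulVec fun j => A a j / s) := h2
        _ ≤ pnormInf (A.mulVec x₀) := h1
        _ = M := hMa.symm
      calc ∑ j, (A a j)^2 = s^2 := hs2.symm
      _ ≤ M^2 := by nlinarith
  -- now the sum of squares of differences is ≤ 0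
  have hdiff : ∑ j, (A a j - M * x₀ j)^2 ≤ 0 := by
    have expand : ∑ j, (A a j - M * x₀ j)^2 =
        (∑ j, (A a j)^2) - 2*M*(∑ j, A a j * x₀ j) + M^2 * (∑ j, (x₀ j)^2) := by
      rw [Finset.mul_sum, Finset.mul_sum, ← Finset.sum_sub_distrib,
        ← Finset.sum_add_distrib]
      exact Finset.sum_congr rfl fun j _ => by ring
    rw [expand, ← hMdef, hx2]
    nlinarith [key]
  have hz : ∀ j ∈ Finset.univ, (A a j - M * x₀ j)^2 = 0 := by
    intro j hj
    have := Finset.sum_nonneg (fun j (_ : j ∈ Finset.univ) => sq_nonneg (A a j - M * x₀ j))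
    have hsum0 : ∑ j, (A a j - M * x₀ j)^2 = 0 := le_antisymm hdiff this
    exact (Finset.sum_eq_zero_iff_of_nonneg (fun j _ => sq_nonneg _)).mp hsum0 j hj
  funext j
  have := pow_eq_zero_iff (two_ne_zero) |>.mp (hz j (Finset.mem_univ j))
  have : A a j = M * x₀ j := by linarith
  simpa [Pi.smul_apply, smul_eq_mul] using this
end
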